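/- arXiv:1403.2695 — 5 statements merged into one kernel-verified Lean document; each statement's English description precedes it below -/
import Mathlib

section
/- Let f₀ and f be probability densities with respect to a measure μ, with ‖f₀/f‖_∞ < ∞. Then the Kullback–Leibler divergence satisfies K(f₀,f) ≤ 2 h²(f₀,f) ‖f₀/f‖_∞, where h²(f₀,f) = ∫ (f₀^{1/2} − f^{1/2})² dμ is the squared Hellinger distance. -/
/-!
Write `u = f₀ / f`. Then `f₀ log (f₀ / f) - f₀ + f = f · klFun u` with `klFun u = u log u + 1 - u`,
and `f (√u - 1)² = (√f₀ - √f)²`. For `1 ≤ C` and `0 ≤ u ≤ C` one has `klFun u ≤ 2C (√u - 1)²`: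
as a function of `t = √u`, the difference `2C (t - 1)² - klFun (t²)` has derivative
`4 (C (t - 1) - t log t)`, which by `t - 1 ≤ t log t ≤ t (t - 1)` is `≤ 0` before `t = 1` and
`≥ 0` after it, up to `t = C`; so it is minimal, namely `0`, at `t = 1`. Integrating the pointwise
bound, the terms `-f₀ + f` integrate to `0`, and `C ≥ 1` because `1 = ∫ f₀ ≤ C ∫ f = C`.
-/

open MeasureTheory Real

open Set InformationTheory

namespace InformationTheory

lemma klFun_sq_le_two_mul_mul_sub_one_sq {C t : ℝ} (hC : 1 ≤ C) (ht : t ∈ Icc 0 C) :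
    klFun (t ^ 2) ≤ 2 * C * (t - 1) ^ 2 := by
  set g : ℝ → ℝ := fun t ↦ 2 * C * (t - 1) ^ 2 - klFun (t ^ 2)
  have hg' (x : ℝ) (hx : x ≠ 0) : HasDerivAt g (4 * (C * (x - 1) - x * log x)) x := by
    have hsq : HasDerivAt (fun x ↦ klFun (x ^ 2)) (log (x ^ 2) * (2 * x)) x :=
      (hasDerivAt_klFun (pow_ne_zero 2 hx)).comp (h := fun x ↦ x ^ 2) x
        (by simpa using hasDerivAt_pow 2 x)
    refine (((hasDerivAt_id' x).sub_const 1).pow 2 |>.const_mul (2 * C) |>.sub hsq).congr_deriv ?_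
    rw [log_pow]
    push_cast
    ring
  have hdiff (a b : ℝ) (ha : 0 ≤ a) : DifferentiableOn ℝ g (Ioo a b) := fun x hx ↦
    (hg' x (ha.trans_lt hx.1).ne').differentiableAt.differentiableWithinAt
  have hg : Continuous g := by
    unfold g
    have := continuous_klFun
    fun_prop
  have hmin : IsMinOn g (Icc 0 C) 1 := by
    refine isMinOn_Icc_of_deriv hg.continuousAt hg.continuousAt hg.continuousAt
      (hdiff 0 1 le_rfl) (hdiff 1 C zero_le_one) (fun x hx ↦ ?_) (fun x hx ↦ ?_)
    · rw [(hg' x hx.1.ne').deriv]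
      nlinarith [self_sub_one_le_mul_log hx.1.le, hx.2]
    · rw [(hg' x (one_pos.trans hx.1).ne').deriv]
      nlinarith [log_le_sub_one_of_pos (one_pos.trans hx.1), hx.1, hx.2]
  simpa [g, klFun_one] using hmin ht

lemma klFun_le_two_mul_mul_sqrt_sub_one_sq {C u : ℝ} (hC : 1 ≤ C) (hu : 0 ≤ u)
    (huC : u ≤ C) :
    klFun u ≤ 2 * C * (√u - 1) ^ 2 := by
  have hsqrt : √u ≤ C := by
    rcases le_total (√u) 1 with h | h
    · linarith
    · nlinarith [sq_sqrt hu]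
  simpa [sq_sqrt hu] using klFun_sq_le_two_mul_mul_sub_one_sq hC ⟨sqrt_nonneg u, hsqrt⟩

end InformationTheory

lemma mul_log_div_sub_add_le {C x y : ℝ} (hC : 1 ≤ C) (hx : 0 ≤ x) (hy : 0 ≤ y)
    (hxy : x ≤ C * y) : x * log (x / y) - x + y ≤ 2 * C * (√x - √y) ^ 2 := by
  rcases hy.eq_or_lt with rfl | hy
  · obtain rfl : x = 0 := le_antisymm (by simpa using hxy) hx
    simp
  have hklFun : y * klFun (x / y) = x * log (x / y) - x + y := by
    rw [klFun_apply]
    field_simp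
    ring
  have hsqrt : y * (√(x / y) - 1) ^ 2 = (√x - √y) ^ 2 := by
    rw [sqrt_div' x hy.le]
    field_simp
    rw [sq_sqrt hy.le]
  calc x * log (x / y) - x + y = y * klFun (x / y) := hklFun.symm
    _ ≤ y * (2 * C * (√(x / y) - 1) ^ 2) :=
      mul_le_mul_of_nonneg_left (klFun_le_two_mul_mul_sqrt_sub_one_sq hC (div_nonneg hx hy.le)
        ((div_le_iff₀ hy).2 hxy)) hy.le
    _ = 2 * C * (√x - √y) ^ 2 := by rw [← hsqrt]; ring

theorem KL_le_two_hellinger_sq_mul_ratio_general {α : Type*} [MeasurableSpace α] (μ : Measure α)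
    (f₀ f : α → ℝ) (C : ℝ)
    (hf₀0 : ∀ a, 0 ≤ f₀ a) (hf0 : ∀ a, 0 ≤ f a)
    (hd₀ : ∫ a, f₀ a ∂μ = 1) (hd : ∫ a, f a ∂μ = 1)
    (hratio : ∀ a, f₀ a ≤ C * f a)
    (hK : Integrable (fun a => f₀ a * Real.log (f₀ a / f a)) μ)
    (hH : Integrable (fun a => (Real.sqrt (f₀ a) - Real.sqrt (f a)) ^ 2) μ) :
    ∫ a, f₀ a * Real.log (f₀ a / f a) ∂μ
      ≤ 2 * (∫ a, (Real.sqrt (f₀ a) - Real.sqrt (f a)) ^ 2 ∂μ) * C := by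
  have hf₀i : Integrable f₀ μ := .of_integral_ne_zero (by simp [hd₀])
  have hfi : Integrable f μ := .of_integral_ne_zero (by simp [hd])
  have hC : 1 ≤ C := by
    simpa [hd₀, hd, integral_const_mul] using integral_mono hf₀i (hfi.const_mul C) hratio
  have hKf₀ : Integrable (fun a ↦ f₀ a * log (f₀ a / f a) - f₀ a) μ := hK.sub hf₀i
  calc ∫ a, f₀ a * log (f₀ a / f a) ∂μ = ∫ a, (f₀ a * log (f₀ a / f a) - f₀ a + f a) ∂μ := by
        rw [integral_add hKf₀ hfi, integral_sub hK hf₀i, hd₀, hd]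
        ring
    _ ≤ ∫ a, 2 * C * (√(f₀ a) - √(f a)) ^ 2 ∂μ :=
      integral_mono (hKf₀.add hfi) (hH.const_mul _) fun a ↦
        mul_log_div_sub_add_le hC (hf₀0 a) (hf0 a) (hratio a)
    _ = 2 * (∫ a, (√(f₀ a) - √(f a)) ^ 2 ∂μ) * C := by
        rw [integral_const_mul]
        ring

/-- Let `f₀` and `f` be probability densities with respect to `μ` with density ratio
`f₀/f` bounded by `C`.  Then the Kullback–Leibler divergence satisfies
`K(f₀, f) ≤ 2 h²(f₀, f) ‖f₀/f‖_∞`, where `h²` is the squared Hellinger distance. -/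
theorem KL_le_two_hellinger_sq_mul_ratio {α : Type*} [MeasurableSpace α] (μ : Measure α)
    (f₀ f : α → ℝ) (C : ℝ)
    (hf₀m : Measurable f₀) (hfm : Measurable f)
    (hf₀0 : ∀ a, 0 ≤ f₀ a) (hf0 : ∀ a, 0 ≤ f a)
    (hd₀ : ∫ a, f₀ a ∂μ = 1) (hd : ∫ a, f a ∂μ = 1)
    (hratio : ∀ a, f₀ a ≤ C * f a)
    (hK : Integrable (fun a => f₀ a * Real.log (f₀ a / f a)) μ)
    (hH : Integrable (fun a => (Real.sqrt (f₀ a) - Real.sqrt (f a)) ^ 2) μ) :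
    ∫ a, f₀ a * Real.log (f₀ a / f a) ∂μ
      ≤ 2 * (∫ a, (Real.sqrt (f₀ a) - Real.sqrt (f a)) ^ 2 ∂μ) * C :=
  KL_le_two_hellinger_sq_mul_ratio_general μ f₀ f C hf₀0 hf0 hd₀ hd hratio hK hH
end

section
/- Let f₀ and f be probability densities with respect to a measure μ, with ‖f₀/f‖_∞ < ∞. Then the Kullback–Leibler variation V(f₀,f) = ∫ f₀ log²(f₀/f) dμ satisfies V(f₀,f) ≤ C h²(f₀,f) (1 + ‖f₀/f‖_∞)² for a universal constant C > 0, where h is the Hellinger distance. -/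
/-!
The bound holds pointwise. For `s > 0` the estimates `1 - 1/s ≤ log s ≤ s - 1` give
`|s log s| ≤ max s 1 * |s - 1|`; applied to `s = √(f₀/f) ≤ √M` this yields
`f₀ log²(f₀/f) ≤ 4 max (f₀/f) 1 (√f₀ - √f)² ≤ 4 (1 + M)² (√f₀ - √f)²`,
and integrating gives the claim with `C = 4`.
-/

open MeasureTheory Real

lemma abs_mul_log_le_max_mul_abs_sub_one {s : ℝ} (hs : 0 < s) :
    |s * log s| ≤ max s 1 * |s - 1| := by
  rcases le_or_gt 1 s with h1 | h1
  · rw [max_eq_left h1, abs_of_nonneg (mul_nonneg hs.le (log_nonneg h1)),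
      abs_of_nonneg (sub_nonneg.2 h1)]
    exact mul_le_mul_of_nonneg_left (log_le_sub_one_of_pos hs) hs.le
  · rw [max_eq_right h1.le, one_mul, abs_of_nonpos (mul_nonpos_of_nonneg_of_nonpos hs.le
      (log_nonpos hs.le h1.le)), abs_of_neg (sub_neg.2 h1)]
    have := mul_le_mul_of_nonneg_left (one_sub_inv_le_log_of_pos hs) hs.le
    rw [mul_sub, mul_one, mul_inv_cancel₀ hs.ne'] at this
    linarith

lemma mul_log_sq_le_max_mul_sqrt_sub_one_sq {t : ℝ} (ht : 0 < t) :
    t * log t ^ 2 ≤ 4 * max t 1 * (√t - 1) ^ 2 := by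
  set s := √t
  have hs : 0 < s := sqrt_pos.2 ht
  have hst : s ^ 2 = t := sq_sqrt ht.le
  have hlog : log t = 2 * log s := by rw [← hst, log_pow]; push_cast; ring
  have hmax : max s 1 ^ 2 = max t 1 := by
    rw [← hst]; rcases le_total 1 s with h | h
    · rw [max_eq_left h, max_eq_left (one_le_pow₀ h)]
    · rw [max_eq_right h, max_eq_right (pow_le_one₀ hs.le h), one_pow]
  have key := pow_le_pow_left₀ (abs_nonneg _) (abs_mul_log_le_max_mul_abs_sub_one hs) 2
  simp only [sq_abs, mul_pow, hmax] at key
  calc t * log t ^ 2 = 4 * (s * log s) ^ 2 := by rw [hlog, ← hst]; ring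
    _ ≤ 4 * max t 1 * (s - 1) ^ 2 := by linarith

lemma mul_log_div_sq_le {x y M : ℝ} (hx : 0 ≤ x) (hy : 0 ≤ y) (hxy : x ≤ M * y) :
    x * log (x / y) ^ 2 ≤ 4 * (1 + M) ^ 2 * (√x - √y) ^ 2 := by
  rcases hx.eq_or_lt with rfl | hx
  · rw [zero_mul]; positivity
  have hy : 0 < y := hy.lt_of_ne (by rintro rfl; linarith)
  have ht : 0 < x / y := div_pos hx hy
  have htM : x / y ≤ M := (div_le_iff₀ hy).2 hxy
  have hmax : max (x / y) 1 ≤ (1 + M) ^ 2 := by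
    rw [max_le_iff]; constructor <;> nlinarith
  have hsqrt : y * (√(x / y) - 1) ^ 2 = (√x - √y) ^ 2 := by
    have hv : √y ≠ 0 := (sqrt_pos.2 hy).ne'
    rw [sqrt_div hx.le, div_sub_one hv, div_pow, sq_sqrt hy.le]
    field_simp
  calc x * log (x / y) ^ 2 = y * (x / y * log (x / y) ^ 2) := by field_simp
    _ ≤ y * (4 * max (x / y) 1 * (√(x / y) - 1) ^ 2) :=
        mul_le_mul_of_nonneg_left (mul_log_sq_le_max_mul_sqrt_sub_one_sq ht) hy.le
    _ = 4 * max (x / y) 1 * (√x - √y) ^ 2 := by rw [← hsqrt]; ring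
    _ ≤ 4 * (1 + M) ^ 2 * (√x - √y) ^ 2 := by gcongr

/-- There is a universal constant `C > 0` such that for all probability densities `f₀, f`
with respect to a measure `μ` with density ratio `f₀/f` bounded by `M`, the
Kullback–Leibler variation satisfies `V(f₀,f) ≤ C h²(f₀,f) (1 + M)²`, where `h` is the
Hellinger distance. -/
theorem KL_variation_le_hellinger_sq :
    ∃ C : ℝ, 0 < C ∧
      ∀ (α : Type) (_ : MeasurableSpace α) (μ : Measure α) (f₀ f : α → ℝ) (M : ℝ),
        Measurable f₀ → Measurable f →
        (∀ a, 0 ≤ f₀ a) → (∀ a, 0 ≤ f a) →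
        (∫ a, f₀ a ∂μ) = 1 → (∫ a, f a ∂μ) = 1 →
        (∀ a, f₀ a ≤ M * f a) →
        Integrable (fun a => f₀ a * (Real.log (f₀ a / f a)) ^ 2) μ →
        Integrable (fun a => (Real.sqrt (f₀ a) - Real.sqrt (f a)) ^ 2) μ →
        ∫ a, f₀ a * (Real.log (f₀ a / f a)) ^ 2 ∂μ
          ≤ C * (∫ a, (Real.sqrt (f₀ a) - Real.sqrt (f a)) ^ 2 ∂μ) * (1 + M) ^ 2 := by
  refine ⟨4, by norm_num, fun α _ μ f₀ f M _ _ hf₀ hf _ _ hle hV hH => ?_⟩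
  calc ∫ a, f₀ a * log (f₀ a / f a) ^ 2 ∂μ
      ≤ ∫ a, 4 * (1 + M) ^ 2 * (√(f₀ a) - √(f a)) ^ 2 ∂μ :=
        integral_mono hV (hH.const_mul _) fun a => mul_log_div_sq_le (hf₀ a) (hf a) (hle a)
    _ = 4 * (∫ a, (√(f₀ a) - √(f a)) ^ 2 ∂μ) * (1 + M) ^ 2 := by
        rw [integral_const_mul]; ring
end

section
/- Let ξ = (ξ_{j₀,j₁,…,j_d}) be nonnegative coefficients satisfying |1 − Σ_{j₀=1}^{J₀} ξ_{j₀,j₁,…,j_d}| ≤ δ < 1/2 for every (j₁,…,j_d), and suppose the function g(y,x) = Σ ξ_{j₀,…,j_d} B̄_{j₀}(y) Π_k B_{j_k}(x_k) satisfies ‖g‖_∞ ≤ M. Define η_{j₀,…,j_d} = ξ_{j₀,…,j_d}/Σ_{m} ξ_{m,j₁,…,j_d}. Then each (η_{j₀,…,j_d} : j₀) lies in the simplex Δ_{J₀}, and ‖g − Σ η_{j₀,…,j_d} B̄_{j₀}(y) Π_k B_{j_k}(x_k)‖_∞ ≤ 2δM. -/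
/-!
A column sum `s` with `|1 - s| ≤ δ < 1/2` exceeds `1/2`, so dividing a nonnegative coefficient
`a` by `s` moves it by `a |s - 1| / s ≤ 2δ a`. Since the basis functions are nonnegative, these
relative errors add up to at most `2δ g ≤ 2δM`.
-/

open Finset

lemma one_half_lt_of_abs_one_sub_le {s δ : ℝ} (hs : |1 - s| ≤ δ) (hδ : δ < 1 / 2) :
    1 / 2 < s := by
  linarith [(abs_le.1 hs).2]

lemma div_sum_mem_stdSimplex {ι : Type*} [Fintype ι] {a : ι → ℝ} (ha : ∀ i, 0 ≤ a i)
    (hsum : 0 < ∑ i, a i) : (fun i ↦ a i / ∑ j, a j) ∈ stdSimplex ℝ ι :=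
  ⟨fun i ↦ div_nonneg (ha i) hsum.le, by rw [← sum_div, div_self hsum.ne']⟩

lemma abs_sub_div_le_of_abs_one_sub_le {a s δ : ℝ} (ha : 0 ≤ a) (hs : |1 - s| ≤ δ)
    (hδ : δ < 1 / 2) : |a - a / s| ≤ 2 * δ * a := by
  have hs_half := one_half_lt_of_abs_one_sub_le hs hδ
  have hs_pos : 0 < s := by linarith
  have hrel : |(s - 1) / s| ≤ 2 * δ := by
    rw [abs_div, abs_of_pos hs_pos, div_le_iff₀ hs_pos, abs_sub_comm]
    nlinarith [abs_nonneg (1 - s)]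
  calc |a - a / s| = a * |(s - 1) / s| := by
        rw [← abs_of_nonneg ha, ← abs_mul, abs_of_nonneg ha]
        congr 1
        field_simp
    _ ≤ a * (2 * δ) := mul_le_mul_of_nonneg_left hrel ha
    _ = 2 * δ * a := mul_comm _ _

lemma abs_sum_mul_sub_sum_mul_le {ι : Type*} (s : Finset ι) {a b w : ι → ℝ} {ε : ℝ}
    (hw : ∀ i ∈ s, 0 ≤ w i) (hab : ∀ i ∈ s, |a i - b i| ≤ ε * a i) :
    |∑ i ∈ s, a i * w i - ∑ i ∈ s, b i * w i| ≤ ε * ∑ i ∈ s, a i * w i :=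
  calc |∑ i ∈ s, a i * w i - ∑ i ∈ s, b i * w i|
      = |∑ i ∈ s, (a i - b i) * w i| := by simp only [← sum_sub_distrib, sub_mul]
    _ ≤ ∑ i ∈ s, |a i - b i| * w i := by
        refine (abs_sum_le_sum_abs _ _).trans (sum_le_sum fun i hi ↦ ?_)
        rw [abs_mul, abs_of_nonneg (hw i hi)]
    _ ≤ ∑ i ∈ s, ε * a i * w i :=
        sum_le_sum fun i hi ↦ mul_le_mul_of_nonneg_right (hab i hi) (hw i hi)
    _ = ε * ∑ i ∈ s, a i * w i := by simp only [mul_sum, mul_assoc]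

theorem renormalized_coefficients_general {X : Type*} {κ : Type*} [Fintype κ] (J₀ : ℕ)
    (ξ : Fin J₀ → κ → ℝ) (δ M : ℝ) (hδ0 : 0 ≤ δ) (hδ : δ < 1 / 2)
    (hξ : ∀ j₀ k, 0 ≤ ξ j₀ k)
    (Bbar : Fin J₀ → ℝ → ℝ) (hBbar : ∀ j₀ y, 0 ≤ Bbar j₀ y)
    (B : κ → X → ℝ) (hB : ∀ k x, 0 ≤ B k x)
    (hdefect : ∀ k, |1 - ∑ j₀, ξ j₀ k| ≤ δ)
    (hbound : ∀ (y : ℝ) (x : X), |∑ j₀, ∑ k, ξ j₀ k * Bbar j₀ y * B k x| ≤ M) :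
    (∀ k, (∀ j₀, 0 ≤ ξ j₀ k / ∑ m, ξ m k) ∧ ∑ j₀, ξ j₀ k / ∑ m, ξ m k = 1) ∧
    ∀ (y : ℝ) (x : X),
      |∑ j₀, ∑ k, ξ j₀ k * Bbar j₀ y * B k x
        - ∑ j₀, ∑ k, (ξ j₀ k / ∑ m, ξ m k) * Bbar j₀ y * B k x| ≤ 2 * δ * M := by
  refine ⟨fun k ↦ div_sum_mem_stdSimplex (fun j₀ ↦ hξ j₀ k) ?_, fun y x ↦ ?_⟩
  · linarith [one_half_lt_of_abs_one_sub_le (hdefect k) hδ]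
  have hperturb := abs_sum_mul_sub_sum_mul_le (univ ×ˢ univ)
    (a := fun p : Fin J₀ × κ ↦ ξ p.1 p.2) (b := fun p ↦ ξ p.1 p.2 / ∑ m, ξ m p.2)
    (w := fun p ↦ Bbar p.1 y * B p.2 x)
    (fun p _ ↦ mul_nonneg (hBbar p.1 y) (hB p.2 x))
    (fun p _ ↦ abs_sub_div_le_of_abs_one_sub_le (hξ p.1 p.2) (hdefect p.2) hδ)
  simp only [sum_product, ← mul_assoc] at hperturb
  calc _ ≤ 2 * δ * ∑ j₀, ∑ k, ξ j₀ k * Bbar j₀ y * B k x := hperturb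
    _ ≤ 2 * δ * M := by gcongr; exact (le_abs_self _).trans (hbound y x)

/-- Renormalization of approximate conditional-density coefficients.  If the nonnegative
coefficients `ξ` have normalization defect at most `δ < 1/2` in each column, and the
induced function `g` is bounded by `M`, then the renormalized coefficients
`η = ξ / (column sum)` lie in the simplex and the induced function changes by at most
`2δM` in supremum norm. -/
theorem renormalized_coefficients {X : Type*} {κ : Type*} [Fintype κ] (J₀ : ℕ)
    (ξ : Fin J₀ → κ → ℝ) (δ M : ℝ) (hδ0 : 0 ≤ δ) (hδ : δ < 1 / 2)
    (hξ : ∀ j₀ k, 0 ≤ ξ j₀ k)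
    (Bbar : Fin J₀ → ℝ → ℝ) (hBbar : ∀ j₀ y, 0 ≤ Bbar j₀ y)
    (B : κ → X → ℝ) (hB : ∀ k x, 0 ≤ B k x) (hBsum : ∀ x, ∑ k, B k x = 1)
    (hdefect : ∀ k, |1 - ∑ j₀, ξ j₀ k| ≤ δ)
    (hbound : ∀ (y : ℝ) (x : X), |∑ j₀, ∑ k, ξ j₀ k * Bbar j₀ y * B k x| ≤ M) :
    (∀ k, (∀ j₀, 0 ≤ ξ j₀ k / ∑ m, ξ m k) ∧ ∑ j₀, ξ j₀ k / ∑ m, ξ m k = 1) ∧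
    ∀ (y : ℝ) (x : X),
      |∑ j₀, ∑ k, ξ j₀ k * Bbar j₀ y * B k x
        - ∑ j₀, ∑ k, (ξ j₀ k / ∑ m, ξ m k) * Bbar j₀ y * B k x| ≤ 2 * δ * M :=
  renormalized_coefficients_general J₀ ξ δ M hδ0 hδ hξ Bbar hBbar B hB hdefect hbound
end

section
/- If a zero-truncated Poisson random variable N with mean λ is used to define J = ⌊N^{1/(r+1)}⌋, then the prior probability mass function of J satisfies exp{−c′ j^{r+1}(log j)} ≤ P(J = j) ≤ exp{−c″ j^{r+1}(log j)} for all sufficiently large j, for some constants c′ ≥ c″ > 0 depending on λ and r. -/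
/-!
With `m = j^(r+1)`, the event `{J = j}` contains `{N = m}` and is contained in `{N ≥ m}`, and
`∑_{n ≥ m} λⁿ/n! ≤ (λ^m/m!) e^λ` because `m! k! ≤ (m+k)!`. Both bounds are therefore
`c λ^m/m!` for a constant `c`, and `m^m e^{-m} ≤ m! ≤ m^m` gives
`log (c λ^m/m!) = -m log m + O(m)`. Since `m = o(m log m)` and `m log m = (r+1) j^(r+1) log j`,
one may take `c' = 2(r+1)` and `c'' = (r+1)/2`.
-/

open Real Filter Finset
open scoped Nat

theorem sum_Ico_pow_div_factorial_le {a : ℝ} (ha : 0 ≤ a) (m K : ℕ) :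
    ∑ n ∈ Ico m K, a ^ n / n ! ≤ a ^ m / m ! * exp a := by
  rw [sum_Ico_eq_sum_range]
  calc ∑ k ∈ range (K - m), a ^ (m + k) / (m + k)!
      ≤ ∑ k ∈ range (K - m), a ^ m / m ! * (a ^ k / k !) := by
        refine sum_le_sum fun k _ => ?_
        have hfac : (m ! * k ! : ℝ) ≤ (m + k)! := by
          exact_mod_cast Nat.le_of_dvd (Nat.factorial_pos _)
            (Nat.factorial_mul_factorial_dvd_factorial_add m k)
        rw [div_mul_div_comm, ← pow_add]
        gcongr
    _ = a ^ m / m ! * ∑ k ∈ range (K - m), a ^ k / k ! := (mul_sum ..).symm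
    _ ≤ a ^ m / m ! * exp a := by gcongr; exact sum_le_exp_of_nonneg ha _

theorem log_factorial_le_mul_log (m : ℕ) : log (m ! : ℝ) ≤ m * log m := by
  rw [← log_pow]
  exact log_le_log (by positivity) (by exact_mod_cast Nat.factorial_le_pow m)

theorem mul_log_sub_le_log_factorial (m : ℕ) : m * log m - m ≤ log (m ! : ℝ) := by
  rcases Nat.eq_zero_or_pos m with rfl | hm
  · simp
  have h := pow_div_factorial_le_exp (x := (m : ℝ)) (Nat.cast_nonneg _) m
  rw [← log_le_log_iff (by positivity) (exp_pos _), log_exp, log_div (by positivity) (by positivity),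
    log_pow] at h
  linarith

theorem mul_pow_div_factorial_eq_exp {a b : ℝ} (ha : 0 < a) (hb : 0 < b) (m : ℕ) :
    b * (a ^ m / m !) = exp (log b + m * log a - log (m ! : ℝ)) := by
  rw [exp_sub, exp_add, exp_log hb, ← log_pow, exp_log (by positivity), exp_log (by positivity),
    mul_div_assoc]

theorem eventually_abs_add_mul_le_mul_mul_log (u v : ℝ) {ε : ℝ} (hε : 0 < ε) :
    ∀ᶠ m : ℕ in atTop, |u + m * v| ≤ ε * (m * log m) := by
  have hlog : ∀ᶠ m : ℕ in atTop, (|u| + |v|) / ε ≤ log m :=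
    (tendsto_log_atTop.comp tendsto_natCast_atTop_atTop).eventually_ge_atTop _
  filter_upwards [hlog, eventually_ge_atTop 1] with m hm hm1
  have hm1 : (1 : ℝ) ≤ m := by exact_mod_cast hm1
  rw [div_le_iff₀ hε] at hm
  calc |u + m * v| ≤ |u| + m * |v| := by
        simpa [abs_mul, abs_of_nonneg (by linarith : (0 : ℝ) ≤ m)] using abs_add_le u (m * v)
    _ ≤ m * |u| + m * |v| := by nlinarith [abs_nonneg u]
    _ = m * (|u| + |v|) := by ring
    _ ≤ m * (log m * ε) := by gcongr
    _ = ε * (m * log m) := by ring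

theorem eventually_exp_le_mul_pow_div_factorial {a b : ℝ} (ha : 0 < a) (hb : 0 < b) :
    ∀ᶠ m : ℕ in atTop, exp (-2 * m * log m) ≤ b * (a ^ m / m !) := by
  filter_upwards [eventually_abs_add_mul_le_mul_mul_log (log b) (log a) one_pos] with m hm
  rw [mul_pow_div_factorial_eq_exp ha hb, exp_le_exp]
  linarith [neg_abs_le (log b + m * log a), log_factorial_le_mul_log m]

theorem eventually_mul_pow_div_factorial_le_exp {a b : ℝ} (ha : 0 < a) (hb : 0 < b) :
    ∀ᶠ m : ℕ in atTop, b * (a ^ m / m !) ≤ exp (-(1 / 2) * m * log m) := by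
  filter_upwards [eventually_abs_add_mul_le_mul_mul_log (log b) (log a + 1) one_half_pos] with m hm
  rw [mul_pow_div_factorial_eq_exp ha hb, exp_le_exp]
  linarith [le_abs_self (log b + m * (log a + 1)), mul_log_sub_le_log_factorial m]

theorem truncated_poisson_root_pmf_general (r : ℕ) (lam : ℝ) (hlam : 0 < lam) :
    ∃ c' c'' : ℝ, 0 < c'' ∧ c'' ≤ c' ∧ ∃ N : ℕ, ∀ j : ℕ, N ≤ j →
      Real.exp (-c' * (j : ℝ) ^ (r + 1) * Real.log j)
          ≤ (∑ n ∈ Finset.Ico (j ^ (r + 1)) ((j + 1) ^ (r + 1)),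
              Real.exp (-lam) * lam ^ n / ((n.factorial : ℝ) * (1 - Real.exp (-lam)))) ∧
        (∑ n ∈ Finset.Ico (j ^ (r + 1)) ((j + 1) ^ (r + 1)),
            Real.exp (-lam) * lam ^ n / ((n.factorial : ℝ) * (1 - Real.exp (-lam))))
          ≤ Real.exp (-c'' * (j : ℝ) ^ (r + 1) * Real.log j) := by
  have hZ : 0 < 1 - exp (-lam) := sub_pos.2 (exp_lt_one_iff.2 (neg_lt_zero.2 hlam))
  set c := exp (-lam) / (1 - exp (-lam))
  have hc : 0 < c := div_pos (exp_pos _) hZ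
  have hterm (n : ℕ) : exp (-lam) * lam ^ n / (n ! * (1 - exp (-lam))) = c * (lam ^ n / n !) := by
    rw [mul_comm (n ! : ℝ), ← div_mul_div_comm, mul_comm]
  simp_rw [hterm, ← mul_sum]
  have hexponent (j : ℕ) (c₀ : ℝ) : -(c₀ * (r + 1)) * (j : ℝ) ^ (r + 1) * log j
      = -c₀ * ((j ^ (r + 1) : ℕ) : ℝ) * log ((j ^ (r + 1) : ℕ) : ℝ) := by
    rw [Nat.cast_pow, log_pow]; push_cast; ring
  refine ⟨2 * (r + 1), 1 / 2 * (r + 1), by positivity, by gcongr; norm_num, eventually_atTop.1 ?_⟩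
  filter_upwards [(tendsto_pow_atTop r.succ_ne_zero).eventually
    ((eventually_exp_le_mul_pow_div_factorial hlam hc).and
      (eventually_mul_pow_div_factorial_le_exp hlam (mul_pos hc (exp_pos lam))))]
    with j ⟨hlower, hupper⟩
  rw [hexponent, hexponent]
  have hmem : j ^ (r + 1) ∈ Ico (j ^ (r + 1)) ((j + 1) ^ (r + 1)) :=
    left_mem_Ico.2 (Nat.pow_lt_pow_left j.lt_succ_self r.succ_ne_zero)
  constructor
  · refine hlower.trans (mul_le_mul_of_nonneg_left ?_ hc.le)
    exact single_le_sum (f := fun n => lam ^ n / n !) (fun _ _ => by positivity) hmem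
  · calc c * ∑ n ∈ Ico (j ^ (r + 1)) ((j + 1) ^ (r + 1)), lam ^ n / n !
        ≤ c * (lam ^ j ^ (r + 1) / (j ^ (r + 1))! * exp lam) := by
          gcongr; exact sum_Ico_pow_div_factorial_le hlam.le _ _
      _ = c * exp lam * (lam ^ j ^ (r + 1) / (j ^ (r + 1))!) := by ring
      _ ≤ _ := hupper

/-- If a zero-truncated Poisson random variable `N` with mean parameter `λ` is used to
define `J = ⌊N^{1/(r+1)}⌋` (so that `{J = j} = {j^{r+1} ≤ N < (j+1)^{r+1}}`), then the
prior probability mass function of `J` satisfies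
`exp(-c' j^{r+1} log j) ≤ P(J = j) ≤ exp(-c'' j^{r+1} log j)` for all sufficiently
large `j`, for constants `c' ≥ c'' > 0` depending on `λ` and `r`. -/
theorem truncated_poisson_root_pmf (r : ℕ) (hr : 1 ≤ r) (lam : ℝ) (hlam : 0 < lam) :
    ∃ c' c'' : ℝ, 0 < c'' ∧ c'' ≤ c' ∧ ∃ N : ℕ, ∀ j : ℕ, N ≤ j →
      Real.exp (-c' * (j : ℝ) ^ (r + 1) * Real.log j)
          ≤ (∑ n ∈ Finset.Ico (j ^ (r + 1)) ((j + 1) ^ (r + 1)),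
              Real.exp (-lam) * lam ^ n / ((n.factorial : ℝ) * (1 - Real.exp (-lam)))) ∧
        (∑ n ∈ Finset.Ico (j ^ (r + 1)) ((j + 1) ^ (r + 1)),
            Real.exp (-lam) * lam ^ n / ((n.factorial : ℝ) * (1 - Real.exp (-lam))))
          ≤ Real.exp (-c'' * (j : ℝ) ^ (r + 1) * Real.log j) :=
  truncated_poisson_root_pmf_general r lam hlam
end

section
/- Fix integers r̄ₙ, J̃ₙ, p ≥ 1 and ε ∈ (0,1). The sieve F_n of all conditional densities of the form h(x,y) = Σ θ_{j₀,j_{m₁},…,j_{m_r}} B̄_{j₀}(y) Π_k B_{j_{m_k}}(x_{m_k}) with r ≤ r̄ₙ, subsets {m₁<⋯<m_r} ⊆ {1,…,p}, basis sizes J₀, J_{m₁},…,J_{m_r} ≤ J̃ₙ, and simplex-valued coefficient vectors, has ε²-covering number in L1 at most Σ_{r=1}^{r̄ₙ} (p choose r) J̃ₙ^{r+1} (3/ε²)^{J̃ₙ^{r+1}}. Hence log D(ε², F_n, ‖·‖₁) ≤ log r̄ₙ + r̄ₙ log p + (r̄ₙ+1) log J̃ₙ + J̃ₙ^{r̄ₙ+1}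 log(3/ε²). -/
/-!
For fixed structural indices `(r, m, J)` the map `θ ↦ h_θ` is `1`-Lipschitz from the maximum over
the columns `jv` of the `ℓ¹`-distances of the simplex vectors `θ(·, jv)` to the `L¹` distance:
for each `x` the tensor B-spline weights `∏ₖ B_{jv k}(x_{m k})` form a probability vector over the
columns and each `B̄_{j₀}` is a probability density on `(0, 1)`, so `∫ |h_θ(x, ·) - h_θ'(x, ·)|` is
at most a convex combination of the column distances. A volume comparison in `ℓ¹` covers the
simplex `Δ_{J₀}` by `(3/ε²)^{J₀}` balls of radius `ε²`; taking one such net per column gives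
`(3/ε²)^{J̃^{r+1}}` coefficient arrays per structure, and there are at most `(p choose r) J̃^{r+1}`
structures of size `r`. The logarithmic bound follows by bounding each of the `r̄` summands by the
largest one.
-/

open MeasureTheory Metric Module
open scoped NNReal ENNReal

section Packing

variable {E : Type*} [NormedAddCommGroup E] [NormedSpace ℝ E] [FiniteDimensional ℝ E]

-- The balls of radius `η / 2` around the points are disjoint and lie in `ball 0 (1 + η / 2)`.
theorem Finset.card_le_of_isSeparated_of_subset_closedBall {η : ℝ≥0} (hη : 0 < η)
    {C : Finset E} (hC : (C : Set E) ⊆ closedBall 0 1) (hsep : IsSeparated η (C : Set E)) :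
    (C.card : ℝ) ≤ (1 + 2 / (η : ℝ)) ^ finrank ℝ E := by
  borelize E
  set μ : Measure E := Measure.addHaar
  have hδ : (0 : ℝ) < η / 2 := by positivity
  have hdisj : (C : Set E).PairwiseDisjoint fun c => ball c (η / 2) := by
    intro c hc d hd hcd
    apply ball_disjoint_ball
    have : (η : ℝ≥0∞) < edist c d := hsep hc hd hcd
    rw [edist_dist, ENNReal.coe_nnreal_eq] at this
    linarith [(ENNReal.ofReal_lt_ofReal_iff_of_nonneg η.coe_nonneg).1 this]
  have hsub : (⋃ c ∈ C, ball c (η / 2)) ⊆ ball (0 : E) (1 + η / 2) := by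
    refine Set.iUnion₂_subset fun c hc => ball_subset_ball' ?_
    have := mem_closedBall.1 (hC hc)
    linarith
  have hvol : (C.card : ℝ≥0∞) * ENNReal.ofReal ((η / 2 : ℝ) ^ finrank ℝ E) * μ (ball 0 1) ≤
      ENNReal.ofReal ((1 + η / 2 : ℝ) ^ finrank ℝ E) * μ (ball 0 1) :=
    calc (C.card : ℝ≥0∞) * ENNReal.ofReal ((η / 2 : ℝ) ^ finrank ℝ E) * μ (ball 0 1)
        = μ (⋃ c ∈ C, ball c (η / 2)) := by
          rw [measure_biUnion_finset hdisj fun c _ => measurableSet_ball]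
          simp only [μ.addHaar_ball_of_pos _ hδ, Finset.sum_const, nsmul_eq_mul, mul_assoc]
      _ ≤ μ (ball 0 (1 + η / 2)) := measure_mono hsub
      _ = ENNReal.ofReal ((1 + η / 2 : ℝ) ^ finrank ℝ E) * μ (ball 0 1) :=
          μ.addHaar_ball_of_pos _ (by positivity)
  have hcard := (ENNReal.mul_le_mul_iff_left (measure_ball_pos μ _ zero_lt_one).ne'
    measure_ball_lt_top.ne).1 hvol
  rw [← ENNReal.ofReal_natCast, ← ENNReal.ofReal_mul (by positivity),
    ENNReal.ofReal_le_ofReal_iff (by positivity)] at hcard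
  calc (C.card : ℝ) = C.card * (η / 2 : ℝ) ^ finrank ℝ E / (η / 2 : ℝ) ^ finrank ℝ E := by
        field_simp
    _ ≤ (1 + η / 2 : ℝ) ^ finrank ℝ E / (η / 2 : ℝ) ^ finrank ℝ E := by gcongr
    _ = (1 + 2 / (η : ℝ)) ^ finrank ℝ E := by
        rw [← div_pow]
        congr 1
        field_simp
        ring

theorem packingNumber_le_of_subset_closedBall {η : ℝ≥0} (hη : 0 < η) {A : Set E}
    (hA : A ⊆ closedBall 0 1) :
    packingNumber η A ≤ ⌊(1 + 2 / (η : ℝ)) ^ finrank ℝ E⌋₊ := by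
  set n := ⌊(1 + 2 / (η : ℝ)) ^ finrank ℝ E⌋₊
  refine iSup₂_le fun C hCA => iSup_le fun hsep => ?_
  by_contra! hlt
  obtain ⟨t, htC, ht⟩ := Set.exists_subset_encard_eq (Order.add_one_le_of_lt hlt)
  have htfin : t.Finite := Set.finite_of_encard_eq_coe ht
  have hcard := Finset.card_le_of_isSeparated_of_subset_closedBall hη (C := htfin.toFinset)
    (by simpa using htC.trans (hCA.trans hA)) (by simpa using hsep.subset htC)
  rw [← Nat.le_floor_iff (by positivity), ← Set.ncard_eq_toFinset_card t htfin, Set.ncard_def,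
    ht] at hcard
  rw [← Nat.cast_add_one, ENat.toNat_natCast] at hcard
  omega

theorem exists_finset_isCover_card_le {η : ℝ≥0} (hη : 0 < η) {A : Set E}
    (hA : A ⊆ closedBall 0 1) :
    ∃ N : Finset E, (N : Set E) ⊆ A ∧ IsCover η A N ∧
      (N.card : ℝ) ≤ (1 + 2 / (η : ℝ)) ^ finrank ℝ E := by
  have hpack := packingNumber_le_of_subset_closedBall hη hA
  have htop : packingNumber η A ≠ ⊤ := ne_top_of_le_ne_top (by simp) hpack
  have hfin : (maximalSeparatedSet η A).Finite :=
    Set.finite_of_encard_le_coe ((encard_maximalSeparatedSet htop).trans_le hpack)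
  refine ⟨hfin.toFinset, by simpa using maximalSeparatedSet_subset,
    by simpa using isCover_maximalSeparatedSet htop, ?_⟩
  rw [← Set.ncard_eq_toFinset_card _ hfin, ← Nat.le_floor_iff (by positivity)]
  have := (encard_maximalSeparatedSet htop).trans_le hpack
  rwa [← hfin.cast_ncard_eq, Nat.cast_le] at this

end Packing

theorem exists_finset_simplex_net {α : Type*} (s : Finset α) {η : ℝ} (hη0 : 0 < η)
    (hη1 : η ≤ 1) :
    ∃ N : Finset (α → ℝ), (N.card : ℝ) ≤ (3 / η) ^ s.card ∧
      ∀ θ : α → ℝ, (∀ a ∈ s, 0 ≤ θ a) → ∑ a ∈ s, θ a = 1 →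
        ∃ θ' ∈ N, ∑ a ∈ s, |θ a - θ' a| ≤ η := by
  classical
  let A : Set (PiLp 1 fun _ : s => ℝ) := {v | (∀ a, 0 ≤ v a) ∧ ∑ a, v a = 1}
  have hA : A ⊆ closedBall 0 1 := fun v hv => by
    rw [mem_closedBall, dist_zero_right, PiLp.norm_eq_of_L1, ← hv.2]
    exact (Finset.sum_congr rfl fun a _ => abs_of_nonneg (hv.1 a)).le
  obtain ⟨N, -, hcover, hcard⟩ := exists_finset_isCover_card_le (Real.toNNReal_pos.2 hη0) hA
  let extend (v : PiLp 1 fun _ : s => ℝ) (a : α) : ℝ := if h : a ∈ s then v ⟨a, h⟩ else 0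
  refine ⟨N.image extend, ?_, fun θ hθ0 hθ1 => ?_⟩
  · have hdim : finrank ℝ (PiLp 1 fun _ : s => ℝ) = s.card := by
      rw [(WithLp.linearEquiv 1 ℝ _).finrank_eq, finrank_fintype_fun_eq_card, Fintype.card_coe]
    calc ((N.image extend).card : ℝ) ≤ N.card := mod_cast Finset.card_image_le
      _ ≤ (1 + 2 / η) ^ s.card := by simpa [hdim, hη0.le] using hcard
      _ ≤ (3 / η) ^ s.card := by
          gcongr
          rw [one_add_div hη0.ne', div_le_div_iff_of_pos_right hη0]
          linarith
  · obtain ⟨w, hwN, hw⟩ := hcover (x := WithLp.toLp 1 fun a : s => θ a)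
      ⟨fun a => hθ0 a a.2, by rwa [Finset.sum_coe_sort s θ]⟩
    refine ⟨extend w, Finset.mem_image_of_mem _ hwN, ?_⟩
    replace hw : edist _ w ≤ _ := hw
    rw [edist_dist, ENNReal.coe_nnreal_eq, Real.coe_toNNReal _ hη0.le,
      ENNReal.ofReal_le_ofReal_iff hη0.le, PiLp.dist_eq_of_L1] at hw
    rw [← Finset.sum_coe_sort s]
    simpa [extend, Real.dist_eq] using hw

theorem exists_finset_simplex_family_net {α β : Type*} (s : Finset α) (t : Finset β) {η : ℝ}
    (hη0 : 0 < η) (hη1 : η ≤ 1) :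
    ∃ N : Finset (α → β → ℝ), (N.card : ℝ) ≤ (3 / η) ^ (s.card * t.card) ∧
      ∀ θ : α → β → ℝ, (∀ b ∈ t, (∀ a ∈ s, 0 ≤ θ a b) ∧ ∑ a ∈ s, θ a b = 1) →
        ∃ θ' ∈ N, ∀ b ∈ t, ∑ a ∈ s, |θ a b - θ' a b| ≤ η := by
  classical
  obtain ⟨N₀, hcard, hnet⟩ := exists_finset_simplex_net s hη0 hη1
  let assemble (g : t → α → ℝ) (a : α) (b : β) : ℝ := if h : b ∈ t then g ⟨b, h⟩ a else 0
  refine ⟨(Fintype.piFinset fun _ : t => N₀).image assemble, ?_, fun θ hθ => ?_⟩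
  · calc (((Fintype.piFinset fun _ : t => N₀).image assemble).card : ℝ)
        ≤ (Fintype.piFinset fun _ : t => N₀).card := mod_cast Finset.card_image_le
      _ = (N₀.card : ℝ) ^ t.card := by simp [Fintype.card_piFinset]
      _ ≤ ((3 / η) ^ s.card) ^ t.card := by gcongr
      _ = (3 / η) ^ (s.card * t.card) := (pow_mul _ _ _).symm
  · choose g hgN hg using fun b : t => hnet (fun a => θ a b) (hθ b b.2).1 (hθ b b.2).2
    refine ⟨assemble g, Finset.mem_image_of_mem _ (Fintype.mem_piFinset.2 hgN), fun b hb => ?_⟩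
    simpa [assemble, hb] using hg ⟨b, hb⟩

theorem integral_abs_sum_mul_le {X ι : Type*} [MeasurableSpace X] {μ : Measure X}
    (s : Finset ι) (c : ι → ℝ) {f : ι → X → ℝ} (hf0 : ∀ i ∈ s, ∀ x, 0 ≤ f i x)
    (hfi : ∀ i ∈ s, Integrable (f i) μ) (hf1 : ∀ i ∈ s, ∫ x, f i x ∂μ = 1) :
    ∫ x, |∑ i ∈ s, c i * f i x| ∂μ ≤ ∑ i ∈ s, |c i| := by
  have hint : Integrable (fun x => ∑ i ∈ s, |c i| * f i x) μ :=
    integrable_finsetSum _ fun i hi => (hfi i hi).const_mul _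
  calc ∫ x, |∑ i ∈ s, c i * f i x| ∂μ ≤ ∫ x, ∑ i ∈ s, |c i| * f i x ∂μ := by
        refine integral_mono_of_nonneg (ae_of_all _ fun x => abs_nonneg _) hint
          (ae_of_all _ fun x => ?_)
        refine (Finset.abs_sum_le_sum_abs _ _).trans_eq (Finset.sum_congr rfl fun i hi => ?_)
        rw [abs_mul, abs_of_nonneg (hf0 i hi x)]
    _ = ∑ i ∈ s, |c i| := by
        rw [integral_finsetSum _ fun i hi => (hfi i hi).const_mul _]
        exact Finset.sum_congr rfl fun i hi => by rw [integral_const_mul, hf1 i hi, mul_one]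

theorem sum_abs_sum_mul_le_of_sum_eq_one {ι κ : Type*} (s : Finset ι) {t : Finset κ}
    {w : κ → ℝ} (hw0 : ∀ k ∈ t, 0 ≤ w k) (hw1 : ∑ k ∈ t, w k = 1) {d : ι → κ → ℝ} {η : ℝ}
    (hd : ∀ k ∈ t, ∑ i ∈ s, |d i k| ≤ η) :
    ∑ i ∈ s, |∑ k ∈ t, d i k * w k| ≤ η :=
  calc ∑ i ∈ s, |∑ k ∈ t, d i k * w k| ≤ ∑ i ∈ s, ∑ k ∈ t, |d i k| * w k := by
        refine Finset.sum_le_sum fun i _ => (Finset.abs_sum_le_sum_abs _ _).trans_eq ?_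
        exact Finset.sum_congr rfl fun k hk => by rw [abs_mul, abs_of_nonneg (hw0 k hk)]
    _ = ∑ k ∈ t, w k * ∑ i ∈ s, |d i k| := by
        rw [Finset.sum_comm]
        simp_rw [Finset.mul_sum, mul_comm]
    _ ≤ ∑ k ∈ t, w k * η :=
        Finset.sum_le_sum fun k hk => mul_le_mul_of_nonneg_left (hd k hk) (hw0 k hk)
    _ = η := by rw [← Finset.sum_mul, hw1, one_mul]

theorem card_filter_strictMono_le_choose (r p : ℕ) :
    (Finset.univ.filter fun m : Fin r → Fin p => StrictMono m).card ≤ p.choose r := by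
  classical
  calc (Finset.univ.filter fun m : Fin r → Fin p => StrictMono m).card
      ≤ (Finset.univ.powersetCard r).card := by
        refine Finset.card_le_card_of_injOn (fun m => Finset.univ.image m) (fun m hm => ?_)
          fun m hm m' hm' hmm' => ?_
        · rw [Finset.mem_coe, Finset.mem_filter] at hm
          simp [Finset.card_image_of_injective _ hm.2.injective]
        · rw [Finset.mem_coe, Finset.mem_filter] at hm hm'
          refine (hm.2.range_inj hm'.2).1 ?_
          simpa [← Finset.coe_inj] using hmm'
    _ = p.choose r := by simp

section Sieve

variable {p r : ℕ}

def splineIndexBox (J : Fin (r + 1) → ℕ) : Finset (Fin r → ℕ) :=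
  Fintype.piFinset fun k : Fin r => Finset.Icc 1 (J k.succ)

def sieveDensity (Bbar B : ℕ → ℕ → ℝ → ℝ) (m : Fin r → Fin p) (J : Fin (r + 1) → ℕ)
    (θ : ℕ → (Fin r → ℕ) → ℝ) (x : Fin p → ℝ) (y : ℝ) : ℝ :=
  ∑ j₀ ∈ Finset.Icc 1 (J 0), ∑ jv ∈ splineIndexBox J,
    θ j₀ jv * Bbar (J 0) j₀ y * ∏ k : Fin r, B (J k.succ) (jv k) (x (m k))

theorem card_Icc_mul_card_splineIndexBox_le {J : Fin (r + 1) → ℕ} {Jt : ℕ}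
    (hJ : ∀ k, J k ≤ Jt) :
    (Finset.Icc 1 (J 0)).card * (splineIndexBox J).card ≤ Jt ^ (r + 1) := by
  simp only [splineIndexBox, Fintype.card_piFinset, Nat.card_Icc, add_tsub_cancel_right]
  rw [← Fin.prod_univ_succ (n := r) J]
  simpa using Finset.prod_le_pow_card Finset.univ J Jt fun k _ => hJ k

theorem sum_splineIndexBox_prod_eq_one {B : ℕ → ℕ → ℝ → ℝ}
    (hB1 : ∀ J : ℕ, 1 ≤ J → ∀ x : ℝ, ∑ j ∈ Finset.Icc 1 J, B J j x = 1)
    {J : Fin (r + 1) → ℕ} (hJ : ∀ k, 1 ≤ J k) (m : Fin r → Fin p) (x : Fin p → ℝ) :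
    ∑ jv ∈ splineIndexBox J, ∏ k : Fin r, B (J k.succ) (jv k) (x (m k)) = 1 := by
  rw [splineIndexBox, ← Finset.prod_univ_sum (fun k => Finset.Icc 1 (J k.succ))
    fun k j => B (J k.succ) j (x (m k))]
  exact Finset.prod_eq_one fun k _ => hB1 _ (hJ k.succ) _

theorem sieveDensity_sub (Bbar B : ℕ → ℕ → ℝ → ℝ) (m : Fin r → Fin p) (J : Fin (r + 1) → ℕ)
    (θ θ' : ℕ → (Fin r → ℕ) → ℝ) (x : Fin p → ℝ) (y : ℝ) :
    sieveDensity Bbar B m J θ x y - sieveDensity Bbar B m J θ' x y =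
      ∑ j₀ ∈ Finset.Icc 1 (J 0), (∑ jv ∈ splineIndexBox J, (θ j₀ jv - θ' j₀ jv) *
        ∏ k : Fin r, B (J k.succ) (jv k) (x (m k))) * Bbar (J 0) j₀ y := by
  simp only [sieveDensity, ← Finset.sum_sub_distrib, Finset.sum_mul]
  exact Finset.sum_congr rfl fun _ _ => Finset.sum_congr rfl fun _ _ => by ring

theorem integral_abs_sieveDensity_sub_le {Bbar B : ℕ → ℕ → ℝ → ℝ}
    (hBbar0 : ∀ J j y, 0 ≤ Bbar J j y)
    (hBbarInt : ∀ J j : ℕ, 1 ≤ J → IntegrableOn (Bbar J j) (Set.Ioo (0 : ℝ) 1))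
    (hBbar1 : ∀ J j : ℕ, 1 ≤ J → 1 ≤ j → j ≤ J →
      (∫ y in Set.Ioo (0 : ℝ) 1, Bbar J j y) = 1)
    (hB0 : ∀ J j x, 0 ≤ B J j x)
    (hB1 : ∀ J : ℕ, 1 ≤ J → ∀ x : ℝ, ∑ j ∈ Finset.Icc 1 J, B J j x = 1)
    (m : Fin r → Fin p) {J : Fin (r + 1) → ℕ} (hJ : ∀ k, 1 ≤ J k)
    {θ θ' : ℕ → (Fin r → ℕ) → ℝ} {η : ℝ}
    (hclose : ∀ jv ∈ splineIndexBox J, ∑ j₀ ∈ Finset.Icc 1 (J 0), |θ j₀ jv - θ' j₀ jv| ≤ η)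
    (x : Fin p → ℝ) :
    ∫ y in Set.Ioo (0 : ℝ) 1,
      |sieveDensity Bbar B m J θ x y - sieveDensity Bbar B m J θ' x y| ≤ η := by
  simp only [sieveDensity_sub]
  refine (integral_abs_sum_mul_le _ _ (fun j₀ _ => hBbar0 (J 0) j₀)
    (fun j₀ _ => hBbarInt _ j₀ (hJ 0))
    (fun j₀ hj₀ => hBbar1 _ j₀ (hJ 0) (Finset.mem_Icc.1 hj₀).1 (Finset.mem_Icc.1 hj₀).2)).trans ?_
  exact sum_abs_sum_mul_le_of_sum_eq_one _
    (fun jv _ => Finset.prod_nonneg fun k _ => hB0 _ _ _)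
    (sum_splineIndexBox_prod_eq_one hB1 hJ m x) hclose

theorem exists_finset_sieve_cover {Bbar B : ℕ → ℕ → ℝ → ℝ}
    (hBbar0 : ∀ J j y, 0 ≤ Bbar J j y)
    (hBbarInt : ∀ J j : ℕ, 1 ≤ J → IntegrableOn (Bbar J j) (Set.Ioo (0 : ℝ) 1))
    (hBbar1 : ∀ J j : ℕ, 1 ≤ J → 1 ≤ j → j ≤ J →
      (∫ y in Set.Ioo (0 : ℝ) 1, Bbar J j y) = 1)
    (hB0 : ∀ J j x, 0 ≤ B J j x)
    (hB1 : ∀ J : ℕ, 1 ≤ J → ∀ x : ℝ, ∑ j ∈ Finset.Icc 1 J, B J j x = 1)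
    (p rbar Jt : ℕ) {η : ℝ} (hη0 : 0 < η) (hη1 : η ≤ 1) :
    ∃ T : Finset ((Fin p → ℝ) → ℝ → ℝ),
      (T.card : ℝ) ≤ ∑ r ∈ Finset.Icc 1 rbar,
          (p.choose r : ℝ) * (Jt : ℝ) ^ (r + 1) * (3 / η) ^ (Jt ^ (r + 1)) ∧
      ∀ r ∈ Finset.Icc 1 rbar, ∀ m : Fin r → Fin p, StrictMono m →
      ∀ J : Fin (r + 1) → ℕ, (∀ k, 1 ≤ J k ∧ J k ≤ Jt) →
      ∀ θ : ℕ → (Fin r → ℕ) → ℝ, (∀ jv ∈ splineIndexBox J,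
        (∀ j₀ ∈ Finset.Icc 1 (J 0), 0 ≤ θ j₀ jv) ∧ ∑ j₀ ∈ Finset.Icc 1 (J 0), θ j₀ jv = 1) →
      ∃ g' ∈ T, ∀ x, ∫ y in Set.Ioo (0 : ℝ) 1, |sieveDensity Bbar B m J θ x y - g' x y| ≤ η := by
  classical
  choose N hNcard hNnet using fun r (J : Fin (r + 1) → ℕ) =>
    exists_finset_simplex_family_net (Finset.Icc 1 (J 0)) (splineIndexBox J) hη0 hη1
  let Ms r := Finset.univ.filter fun m : Fin r → Fin p => StrictMono m
  let Js r := Fintype.piFinset fun _ : Fin (r + 1) => Finset.Icc 1 Jt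
  refine ⟨(Finset.Icc 1 rbar).biUnion fun r => (Ms r).biUnion fun m => (Js r).biUnion fun J =>
    (N r J).image (sieveDensity Bbar B m J), ?_, ?_⟩
  · have hN : ∀ r, ∀ J ∈ Js r, ((N r J).card : ℝ) ≤ (3 / η) ^ (Jt ^ (r + 1)) := fun r J hJ =>
      (hNcard r J).trans <| pow_le_pow_right₀ (by rw [le_div_iff₀ hη0]; linarith) <|
        card_Icc_mul_card_splineIndexBox_le fun k =>
          (Finset.mem_Icc.1 (Fintype.mem_piFinset.1 hJ k)).2
    refine (Nat.cast_le.2 (Finset.card_biUnion_le.trans (Finset.sum_le_sum fun r _ =>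
      Finset.card_biUnion_le.trans (Finset.sum_le_sum fun m _ =>
        Finset.card_biUnion_le.trans (Finset.sum_le_sum fun J _ => Finset.card_image_le)))))
      |>.trans ?_
    push_cast
    refine Finset.sum_le_sum fun r _ => ?_
    calc ∑ m ∈ Ms r, ∑ J ∈ Js r, ((N r J).card : ℝ)
        ≤ ∑ m ∈ Ms r, ∑ J ∈ Js r, (3 / η) ^ (Jt ^ (r + 1)) :=
          Finset.sum_le_sum fun m _ => Finset.sum_le_sum (hN r)
      _ = (Ms r).card * (Jt : ℝ) ^ (r + 1) * (3 / η) ^ (Jt ^ (r + 1)) := by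
          simp [Js, Fintype.card_piFinset, mul_assoc]
      _ ≤ (p.choose r : ℝ) * (Jt : ℝ) ^ (r + 1) * (3 / η) ^ (Jt ^ (r + 1)) := by
          gcongr
          exact_mod_cast card_filter_strictMono_le_choose r p
  · intro r hr m hm J hJ θ hθ
    obtain ⟨θ', hθ'N, hclose⟩ := hNnet r J θ hθ
    refine ⟨sieveDensity Bbar B m J θ', ?_, integral_abs_sieveDensity_sub_le hBbar0 hBbarInt
      hBbar1 hB0 hB1 m (fun k => (hJ k).1) hclose⟩
    simp only [Finset.mem_biUnion, Finset.mem_image]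
    exact ⟨r, hr, m, by simpa [Ms] using hm, J, Fintype.mem_piFinset.2 fun k =>
      Finset.mem_Icc.2 (hJ k), θ', hθ'N, rfl⟩

end Sieve

theorem log_sum_choose_mul_pow_le {p R J : ℕ} (hp : 1 ≤ p) (hR : 1 ≤ R) (hJ : 1 ≤ J)
    {a : ℝ} (ha : 1 ≤ a) :
    Real.log (∑ r ∈ Finset.Icc 1 R, (p.choose r : ℝ) * (J : ℝ) ^ (r + 1) * a ^ (J ^ (r + 1)))
      ≤ Real.log R + R * Real.log p + (R + 1) * Real.log J + (J : ℝ) ^ (R + 1) * Real.log a := by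
  have hp' : (1 : ℝ) ≤ p := by exact_mod_cast hp
  have hJ' : (1 : ℝ) ≤ J := by exact_mod_cast hJ
  have hterm : ∀ r ∈ Finset.Icc 1 R, (p.choose r : ℝ) * (J : ℝ) ^ (r + 1) * a ^ (J ^ (r + 1)) ≤
      (p : ℝ) ^ R * (J : ℝ) ^ (R + 1) * a ^ (J ^ (R + 1)) := fun r hr => by
    obtain ⟨-, hrR⟩ := Finset.mem_Icc.1 hr
    gcongr
    exact (Nat.cast_le.2 (Nat.choose_le_pow p r)).trans_eq (Nat.cast_pow p r) |>.trans
      (pow_le_pow_right₀ hp' hrR)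
  have hpos : 0 < ∑ r ∈ Finset.Icc 1 R, (p.choose r : ℝ) * (J : ℝ) ^ (r + 1) * a ^ (J ^ (r + 1)) :=
    Finset.sum_pos' (fun r _ => by positivity) ⟨1, Finset.mem_Icc.2 ⟨le_rfl, hR⟩, by
      simp only [Nat.choose_one_right]; positivity⟩
  calc _ ≤ Real.log (R * ((p : ℝ) ^ R * (J : ℝ) ^ (R + 1) * a ^ (J ^ (R + 1)))) := by
        refine Real.log_le_log hpos ((Finset.sum_le_sum hterm).trans_eq ?_)
        simp
    _ = _ := by
        have : (0 : ℝ) < a := by linarith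
        rw [Real.log_mul (by positivity) (by positivity),
          Real.log_mul (by positivity) (by positivity),
          Real.log_mul (by positivity) (by positivity), Real.log_pow, Real.log_pow, Real.log_pow]
        push_cast
        ring

/-- Entropy bound for the sieve.  The sieve of all conditional densities of the form
`h(x,y) = Σ θ_{j₀,j} B̄_{j₀}(y) Π_k B_{j_{m_k}}(x_{m_k})` with model size `r ≤ r̄`,
active predictors `m₁ < ⋯ < m_r` in `{1,…,p}`, basis sizes at most `J̃` and
simplex-valued coefficients, admits an `ε²`-cover in `L¹` of cardinality at most
`Σ_{r=1}^{r̄} (p choose r) J̃^{r+1} (3/ε²)^{J̃^{r+1}}`; hence its `L¹` metric entropy is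
at most `log r̄ + r̄ log p + (r̄+1) log J̃ + J̃^{r̄+1} log(3/ε²)`. -/
theorem sieve_entropy_bound (p rbar Jt : ℕ) (hp : 1 ≤ p) (hrbar : 1 ≤ rbar)
    (hJt : 1 ≤ Jt) (ε : ℝ) (hε0 : 0 < ε) (hε1 : ε < 1)
    (G : Measure (Fin p → ℝ)) [IsProbabilityMeasure G]
    (Bbar : ℕ → ℕ → ℝ → ℝ) (B : ℕ → ℕ → ℝ → ℝ)
    (hBbar0 : ∀ J j y, 0 ≤ Bbar J j y)
    (hBbarInt : ∀ J j : ℕ, 1 ≤ J → IntegrableOn (Bbar J j) (Set.Ioo (0 : ℝ) 1))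
    (hBbar1 : ∀ J j : ℕ, 1 ≤ J → 1 ≤ j → j ≤ J →
      (∫ y in Set.Ioo (0 : ℝ) 1, Bbar J j y) = 1)
    (hB0 : ∀ J j x, 0 ≤ B J j x)
    (hB1 : ∀ J : ℕ, 1 ≤ J → ∀ x : ℝ, ∑ j ∈ Finset.Icc 1 J, B J j x = 1) :
    ∃ T : Finset ((Fin p → ℝ) → ℝ → ℝ),
      (T.card : ℝ) ≤ ∑ r ∈ Finset.Icc 1 rbar,
          (p.choose r : ℝ) * (Jt : ℝ) ^ (r + 1) * (3 / ε ^ 2) ^ (Jt ^ (r + 1)) ∧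
      (∀ g : (Fin p → ℝ) → ℝ → ℝ,
        (∃ r : ℕ, 1 ≤ r ∧ r ≤ rbar ∧ ∃ m : Fin r → Fin p, StrictMono m ∧
          ∃ J : Fin (r + 1) → ℕ, (∀ k, 1 ≤ J k ∧ J k ≤ Jt) ∧
          ∃ θ : ℕ → (Fin r → ℕ) → ℝ,
            (∀ jv : Fin r → ℕ,
              (∀ j₀, 0 ≤ θ j₀ jv) ∧ ∑ j₀ ∈ Finset.Icc 1 (J 0), θ j₀ jv = 1) ∧
            ∀ (x : Fin p → ℝ) (y : ℝ), g x y = ∑ j₀ ∈ Finset.Icc 1 (J 0),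
              ∑ jv ∈ Fintype.piFinset (fun k : Fin r => Finset.Icc 1 (J k.succ)),
                θ j₀ jv * Bbar (J 0) j₀ y *
                  ∏ k : Fin r, B (J k.succ) (jv k) (x (m k))) →
        ∃ g' ∈ T, (∫ x, (∫ y in Set.Ioo (0 : ℝ) 1, |g x y - g' x y|) ∂G) ≤ ε ^ 2) ∧
      Real.log (∑ r ∈ Finset.Icc 1 rbar,
          (p.choose r : ℝ) * (Jt : ℝ) ^ (r + 1) * (3 / ε ^ 2) ^ (Jt ^ (r + 1)))
        ≤ Real.log rbar + rbar * Real.log p + (rbar + 1) * Real.log Jt +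
            (Jt : ℝ) ^ (rbar + 1) * Real.log (3 / ε ^ 2) := by
  have hη0 : 0 < ε ^ 2 := by positivity
  have hη1 : ε ^ 2 ≤ 1 := pow_le_one₀ hε0.le hε1.le
  obtain ⟨T, hTcard, hTcover⟩ :=
    exists_finset_sieve_cover hBbar0 hBbarInt hBbar1 hB0 hB1 p rbar Jt hη0 hη1
  refine ⟨T, hTcard, ?_, log_sum_choose_mul_pow_le hp hrbar hJt (by rw [le_div_iff₀ hη0]; linarith)⟩
  rintro g ⟨r, hr1, hr2, m, hm, J, hJ, θ, hθ, hg⟩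
  obtain rfl : g = sieveDensity Bbar B m J θ := funext fun x => funext (hg x)
  obtain ⟨g', hg'T, hclose⟩ := hTcover r (Finset.mem_Icc.2 ⟨hr1, hr2⟩) m hm J hJ θ
    fun jv _ => ⟨fun j₀ _ => (hθ jv).1 j₀, (hθ jv).2⟩
  refine ⟨g', hg'T, (Real.le_norm_self _).trans ?_⟩
  refine (norm_integral_le_of_norm_le_const (C := ε ^ 2) (ae_of_all G fun x => ?_)).trans_eq
    (by simp)
  rw [Real.norm_of_nonneg (integral_nonneg fun y => abs_nonneg _)]
  exact hclose x
end
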